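/- The run from o terminates at d if and only if there exists an integral switching flow, i.e., a function x : E → ℕ satisfying flow conservation of value 1 from o to d and the balancing inequalities 0 ≤ x(v,s₁(v)) ≤ x(v,s₀(v)) ≤ x(v,s₁(v)) + 1 for all v. -/

import Mathlib

open scoped Classical

/-- A switch graph: every vertex has an even successor `s0 v` and an odd successor `s1 v`. -/
structure SwitchGraph (V : Type) where
  s0 : V → V
  s1 : V → V

namespace SwitchGraph

variable {V : Type}

/-- The successor of `v` along the edge of parity `b` (`false` = even, `true` = odd). -/
def succ (G : SwitchGraph V) (v : V) (b : Bool) : V :=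
  if b then G.s1 v else G.s0 v

/-- One step of the run: move to the currently active successor and flip the switch. -/
def step [DecidableEq V] (G : SwitchGraph V) (p : V × (V → Bool)) : V × (V → Bool) :=
  (G.succ p.1 (p.2 p.1), Function.update p.2 p.1 (!p.2 p.1))

/-- The state of the run after `n` steps, starting at `o` with all switches even,
stopping (freezing) upon reaching `d`. -/
def run [DecidableEq V] (G : SwitchGraph V) (o d : V) (n : ℕ) : V × (V → Bool) :=
  (fun p => if p.1 = d then p else G.step p)^[n] (o, fun _ => false)

/-- The run from `o` terminates at `d`. -/
def Terminates [DecidableEq V] (G : SwitchGraph V) (o d : V) : Prop :=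
  ∃ n, (G.run o d n).1 = d

/-- Number of traversals of the outgoing edge of `v` of parity `b` during
the first `N` steps of the run. -/
def traversals [DecidableEq V] (G : SwitchGraph V) (o d : V) (N : ℕ) (v : V) (b : Bool) : ℕ :=
  ((Finset.range N).filter
    (fun n => (G.run o d n).1 = v ∧ v ≠ d ∧ (G.run o d n).2 v = b)).card

/-- Total weight on edges leaving `v`. -/
def outflow {M : Type} [AddCommMonoid M] (x : V → Bool → M) (v : V) : M :=
  x v false + x v true

/-- Total weight on edges entering `v`. -/
def inflow [Fintype V] [DecidableEq V] (G : SwitchGraph V) {M : Type} [AddCommMonoid M]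
    (x : V → Bool → M) (v : V) : M :=
  ∑ u : V, ∑ b : Bool, if G.succ u b = v then x u b else 0

/-- A switching flow: flow conservation of value 1 from `o` to `d`, together with the
balancing condition `x v true ≤ x v false ≤ x v true + 1` at every vertex. -/
def IsSwitchingFlow [Fintype V] [DecidableEq V] (G : SwitchGraph V) (o d : V)
    (x : V → Bool → ℕ) : Prop :=
  (∀ v, outflow x v + (if v = d then 1 else 0) = G.inflow x v + (if v = o then 1 else 0)) ∧
  (∀ v, x v true ≤ x v false ∧ x v false ≤ x v true + 1)

/-- The edge relation of the underlying directed graph `(V, E)`. -/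
def stepRel (G : SwitchGraph V) (a b : V) : Prop :=
  G.s0 a = b ∨ G.s1 a = b

/-- A dead end: a vertex with no directed path to `d` in `(V, E)`. -/
def DeadEnd (G : SwitchGraph V) (d w : V) : Prop :=
  ¬ Relation.ReflTransGen G.stepRel w d

/-- There is a directed walk of length `k` from `w` to `d` in `(V, E)`. -/
def Chain (G : SwitchGraph V) (w d : V) (k : ℕ) : Prop :=
  ∃ f : ℕ → V, f 0 = w ∧ f k = d ∧ ∀ i < k, G.stepRel (f i) (f (i + 1))

end SwitchGraph

open SwitchGraph

/-!
Up to termination, the edge traversal counts of the run form a switching flow: conservation holds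
because the run is a walk from `o`, and balance because each switch alternates starting with the
even edge. Conversely, given a switching flow `x`, the run never traverses an edge more often than
`x` does. Indeed, when it leaves `u` along the active edge, conservation of both flows shows that it
has left `u` fewer times than `x` does, and since both are balanced at `u`, the deficit lies on the
active edge. Hence the run reaches `d` within `∑ x` steps.
-/

namespace SwitchGraph

lemma apply_lt_of_sum_lt_of_balanced {a x : Bool → ℕ} {b : Bool}
    (ha : a false = a true + if b then 1 else 0) (hx : x true ≤ x false ∧ x false ≤ x true + 1)
    (h : a false + a true < x false + x true) : a b < x b := by
  cases b <;> simp only [Bool.false_eq_true, if_true, if_false] at ha <;> omega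

variable {V : Type}

lemma outflow_add {M : Type} [AddCommMonoid M] (x y : V → Bool → M) (v : V) :
    outflow (x + y) v = outflow x v + outflow y v := by
  simp only [outflow, Pi.add_apply]
  abel

lemma outflow_mono {x y : V → Bool → ℕ} (h : x ≤ y) (v : V) : outflow x v ≤ outflow y v :=
  add_le_add (h v false) (h v true)

variable [DecidableEq V] {G : SwitchGraph V} {o d : V}

def activeEdgeIndicator (p : V × (V → Bool)) : V → Bool → ℕ :=
  Pi.single p.1 (Pi.single (p.2 p.1) 1)

lemma add_activeEdgeIndicator_le {t x : V → Bool → ℕ} {p : V × (V → Bool)} (ht : t ≤ x)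
    (hlt : t p.1 (p.2 p.1) < x p.1 (p.2 p.1)) : t + activeEdgeIndicator p ≤ x := by
  intro v b
  simp only [Pi.add_apply, activeEdgeIndicator, Pi.single_apply]
  split_ifs with hv
  · subst hv
    rw [Pi.single_apply]
    split_ifs with hb
    · exact hb ▸ hlt
    · simpa using ht _ b
  · simpa using ht v b

lemma run_succ_of_ne {N : ℕ} (hN : (G.run o d N).1 ≠ d) :
    G.run o d (N + 1) = G.step (G.run o d N) := by
  rw [run, Function.iterate_succ_apply', ← run, if_neg hN]

lemma traversals_zero : G.traversals o d 0 = 0 := rfl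

lemma traversals_succ_of_ne {N : ℕ} (hN : (G.run o d N).1 ≠ d) :
    G.traversals o d (N + 1) = G.traversals o d N + activeEdgeIndicator (G.run o d N) := by
  funext v b
  simp only [traversals, Finset.card_filter, Finset.sum_range_succ, Pi.add_apply,
    activeEdgeIndicator, Pi.single_apply]
  congr 1
  by_cases hv : v = (G.run o d N).1
  · subst hv
    simp [hN, eq_comm, Pi.single_apply]
  · simp [hv, Ne.symm hv]

lemma traversals_false_eq {N : ℕ} (hN : ∀ n < N, (G.run o d n).1 ≠ d) (v : V) :
    G.traversals o d N v false =
      G.traversals o d N v true + if (G.run o d N).2 v then 1 else 0 := by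
  induction N with
  | zero => simp [traversals_zero, run]
  | succ N ih =>
    have hNd := hN N N.lt_succ_self
    rw [traversals_succ_of_ne hNd, run_succ_of_ne hNd]
    have ih := ih fun n hn => hN n (hn.trans N.lt_succ_self)
    generalize G.run o d N = p at ih
    obtain ⟨u, s⟩ := p
    by_cases hv : v = u
    · subst hv
      cases hs : s v <;> simp_all [activeEdgeIndicator, step]
    · simp_all [activeEdgeIndicator, step]

lemma outflow_activeEdgeIndicator (p : V × (V → Bool)) (v : V) :
    outflow (activeEdgeIndicator p) v = if p.1 = v then 1 else 0 := by
  by_cases hv : p.1 = v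
  · subst hv
    cases h : p.2 p.1 <;> simp [outflow, activeEdgeIndicator, h]
  · simp [outflow, activeEdgeIndicator, hv, Ne.symm hv]

variable [Fintype V]

lemma inflow_add {M : Type} [AddCommMonoid M] (x y : V → Bool → M) (v : V) :
    G.inflow (x + y) v = G.inflow x v + G.inflow y v := by
  simp only [inflow, Pi.add_apply, ← Finset.sum_add_distrib]
  refine Finset.sum_congr rfl fun u _ => Finset.sum_congr rfl fun b _ => ?_
  split_ifs <;> simp

lemma inflow_mono {x y : V → Bool → ℕ} (h : x ≤ y) (v : V) : G.inflow x v ≤ G.inflow y v := by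
  refine Finset.sum_le_sum fun u _ => Finset.sum_le_sum fun b _ => ?_
  split_ifs
  exacts [h u b, le_rfl]

lemma inflow_activeEdgeIndicator (p : V × (V → Bool)) (v : V) :
    G.inflow (activeEdgeIndicator p) v = if (G.step p).1 = v then 1 else 0 := by
  rw [inflow, Finset.sum_eq_single p.1, Finset.sum_eq_single (p.2 p.1)]
  · simp [activeEdgeIndicator, step]
    congr
  · intro b _ hb; simp [activeEdgeIndicator, hb]
  · simp
  · intro u _ hu; simp [activeEdgeIndicator, hu]
  · simp

lemma traversals_conservation {N : ℕ} (hN : ∀ n < N, (G.run o d n).1 ≠ d) (v : V) :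
    outflow (G.traversals o d N) v + (if (G.run o d N).1 = v then 1 else 0) =
      G.inflow (G.traversals o d N) v + if v = o then 1 else 0 := by
  induction N with
  | zero => simp [traversals_zero, outflow, inflow, run, eq_comm]
  | succ N ih =>
    have hNd := hN N N.lt_succ_self
    have ih := ih fun n hn => hN n (hn.trans N.lt_succ_self)
    rw [traversals_succ_of_ne hNd, outflow_add, inflow_add, outflow_activeEdgeIndicator,
      inflow_activeEdgeIndicator, run_succ_of_ne hNd]
    split_ifs at ih ⊢ <;> omega

lemma sum_outflow_traversals {N : ℕ} (hN : ∀ n < N, (G.run o d n).1 ≠ d) :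
    ∑ v, outflow (G.traversals o d N) v = N := by
  induction N with
  | zero => simp [traversals_zero, outflow]
  | succ N ih =>
    have hNd := hN N N.lt_succ_self
    simp only [traversals_succ_of_ne hNd, outflow_add, Finset.sum_add_distrib,
      outflow_activeEdgeIndicator, Finset.sum_ite_eq, Finset.mem_univ, if_true,
      ih fun n hn => hN n (hn.trans N.lt_succ_self)]

lemma traversals_le_of_isSwitchingFlow {x : V → Bool → ℕ} (hx : G.IsSwitchingFlow o d x)
    {N : ℕ} (hN : ∀ n < N, (G.run o d n).1 ≠ d) : G.traversals o d N ≤ x := by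
  induction N with
  | zero => simp [traversals_zero]
  | succ N ih =>
    have hNd := hN N N.lt_succ_self
    have hN' : ∀ n < N, (G.run o d n).1 ≠ d := fun n hn => hN n (hn.trans N.lt_succ_self)
    have ih := ih hN'
    have hcons := traversals_conservation hN' (G.run o d N).1
    have hflow := hx.1 (G.run o d N).1
    have hin := inflow_mono (G := G) ih (G.run o d N).1
    rw [if_pos rfl] at hcons
    rw [if_neg hNd] at hflow
    rw [traversals_succ_of_ne hNd]
    refine add_activeEdgeIndicator_le ih
      (apply_lt_of_sum_lt_of_balanced (traversals_false_eq hN' _) (hx.2 _) ?_)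
    simp only [outflow] at hcons hflow
    omega

lemma isSwitchingFlow_traversals_find (hT : G.Terminates o d) :
    G.IsSwitchingFlow o d (G.traversals o d (Nat.find hT)) := by
  have hN : ∀ n < Nat.find hT, (G.run o d n).1 ≠ d := fun n hn => Nat.find_min hT hn
  refine ⟨fun v => ?_, fun v => ?_⟩
  · have hcons := traversals_conservation hN v
    rw [Nat.find_spec hT] at hcons
    simpa only [eq_comm (a := d)] using hcons
  · have hparity := traversals_false_eq hN v
    split at hparity <;> omega

lemma terminates_of_isSwitchingFlow {x : V → Bool → ℕ} (hx : G.IsSwitchingFlow o d x) :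
    G.Terminates o d := by
  by_contra hT
  have hN : ∀ n < ∑ v, outflow x v + 1, (G.run o d n).1 ≠ d := fun n _ h => hT ⟨n, h⟩
  have hle : ∑ v, outflow (G.traversals o d _) v ≤ ∑ v, outflow x v :=
    Finset.sum_le_sum fun v _ => outflow_mono (traversals_le_of_isSwitchingFlow hx hN) v
  rw [sum_outflow_traversals hN] at hle
  omega

end SwitchGraph

theorem stmt15_general {V : Type} [Fintype V] [DecidableEq V] (G : SwitchGraph V) (o d : V) :
    G.Terminates o d ↔ ∃ x : V → Bool → ℕ, G.IsSwitchingFlow o d x :=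
  ⟨fun hT => ⟨_, isSwitchingFlow_traversals_find hT⟩,
    fun ⟨_, hx⟩ => terminates_of_isSwitchingFlow hx⟩

/-- The run terminates at `d` iff an integral switching flow exists. -/
theorem stmt15 {V : Type} [Fintype V] [DecidableEq V] (G : SwitchGraph V) (o d : V)
    (hod : o ≠ d) :
    G.Terminates o d ↔ ∃ x : V → Bool → ℕ, G.IsSwitchingFlow o d x :=
  stmt15_general G o d
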